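/- Fix J in N with J >= 1, rates lambda : Fin J -> R with lambda_j > 0, costs b : Fin J -> R, capacities Q : Fin J -> N with Q_j >= 1, and A in R. Define the fixed-cycle cost C_F(T) = (A + sum over j of b_j * S(lambda_j * T, Q_j)) / T for T > 0. Then C_F is differentiable at every T > 0 with derivative (-A + sum over j of b_j * Q_j * Ptail(lambda_j * T, Q_j + 1)) / T^2. -/

import Mathlib

open scoped BigOperators

/-- Poisson probability mass function with mean `μ` at `r`. -/
noncomputable def poissonPMF (μ : ℝ) (r : ℕ) : ℝ :=
  Real.exp (-μ) * μ ^ r / (Nat.factorial r)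

/-- Poisson tail probability `P(D ≥ k)` for a natural-number threshold `k`. -/
noncomputable def Ptail (μ : ℝ) (k : ℕ) : ℝ :=
  ∑' r : ℕ, if k ≤ r then poissonPMF μ r else 0

/-- Expected shortage `E[(D - Q)^+]` for a natural-number capacity `Q`. -/
noncomputable def shortage (μ : ℝ) (Q : ℕ) : ℝ :=
  ∑' r : ℕ, if Q ≤ r then ((r : ℝ) - (Q : ℝ)) * poissonPMF μ r else 0

lemma summable_poisson_abs (μ : ℝ) : Summable (fun r => |poissonPMF μ r|) := by
  have h := (Real.summable_pow_div_factorial |μ|).mul_left (Real.exp (-μ))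
  refine h.congr fun r => ?_
  simp [poissonPMF, abs_div, abs_mul, abs_pow, abs_of_pos (Real.exp_pos (-μ)),
    Nat.abs_cast, mul_div_assoc]

lemma summable_poisson (μ : ℝ) : Summable (fun r => poissonPMF μ r) :=
  (summable_poisson_abs μ).of_abs

lemma tsum_poisson (μ : ℝ) : ∑' r : ℕ, poissonPMF μ r = 1 := by
  have h : ∑' r : ℕ, poissonPMF μ r = Real.exp (-μ) * ∑' r : ℕ, μ ^ r / (Nat.factorial r) := by
    rw [← tsum_mul_left]
    exact tsum_congr fun r => by simp [poissonPMF, mul_div_assoc]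
  rw [h]
  have : ∑' r : ℕ, μ ^ r / (Nat.factorial r) = Real.exp μ := by
    rw [Real.exp_eq_exp_ℝ, NormedSpace.exp_eq_tsum_div]
  rw [this, ← Real.exp_add]; simp

lemma mu_mul_poisson (μ : ℝ) (r : ℕ) :
    μ * poissonPMF μ r = ((r : ℝ) + 1) * poissonPMF μ (r + 1) := by
  have h : ((Nat.factorial r : ℝ)) ≠ 0 := Nat.cast_ne_zero.mpr (Nat.factorial_ne_zero r)
  have h2 : ((Nat.factorial (r+1) : ℝ)) ≠ 0 := Nat.cast_ne_zero.mpr (Nat.factorial_ne_zero _)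
  simp only [poissonPMF, Nat.factorial_succ]
  push_cast
  field_simp
  ring

lemma summable_id_poisson (μ : ℝ) : Summable (fun r : ℕ => (r : ℝ) * poissonPMF μ r) := by
  rw [← summable_nat_add_iff 1]
  refine ((summable_poisson μ).mul_left μ).congr fun r => ?_
  push_cast
  exact mu_mul_poisson μ r

lemma tsum_id_poisson (μ : ℝ) : ∑' r : ℕ, (r : ℝ) * poissonPMF μ r = μ := by
  rw [Summable.tsum_eq_zero_add (summable_id_poisson μ)]
  simp only [Nat.cast_zero, zero_mul, zero_add]
  have h1 : ∀ n : ℕ, ((n + 1 : ℕ) : ℝ) * poissonPMF μ (n + 1) = μ * poissonPMF μ n := by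
    intro n; push_cast; exact (mu_mul_poisson μ n).symm
  rw [tsum_congr h1, tsum_mul_left, tsum_poisson, mul_one]

lemma Ptail_eq (μ : ℝ) (k : ℕ) :
    Ptail μ k = 1 - ∑ r ∈ Finset.range k, poissonPMF μ r := by
  have hs : Summable (fun r : ℕ => if k ≤ r then poissonPMF μ r else 0) := by
    refine Summable.of_norm_bounded (summable_poisson_abs μ) fun r => ?_
    by_cases h : k ≤ r <;> simp [h, Real.norm_eq_abs, abs_nonneg]
  have h1 := Summable.sum_add_tsum_nat_add (f := fun r : ℕ => if k ≤ r then poissonPMF μ r else 0) k hs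
  have h2 := Summable.sum_add_tsum_nat_add (f := fun r : ℕ => poissonPMF μ r) k (summable_poisson μ)
  have e1 : ∑ i ∈ Finset.range k, (if k ≤ i then poissonPMF μ i else 0) = 0 := by
    refine Finset.sum_eq_zero fun i hi => ?_
    rw [Finset.mem_range] at hi
    simp [Nat.not_le.mpr hi]
  have e2 : ∀ i : ℕ, (if k ≤ i + k then poissonPMF μ (i + k) else 0) = poissonPMF μ (i + k) := by
    intro i; simp [Nat.le_add_left]
  rw [tsum_poisson] at h2
  unfold Ptail
  rw [← h1, e1, zero_add, tsum_congr e2]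
  linarith

lemma summable_shift_poisson (μ : ℝ) (Q : ℕ) :
    Summable (fun r : ℕ => ((r : ℝ) - (Q : ℝ)) * poissonPMF μ r) := by
  have := (summable_id_poisson μ).sub ((summable_poisson μ).mul_left (Q : ℝ))
  refine this.congr fun r => ?_
  ring

lemma shortage_eq (μ : ℝ) (Q : ℕ) :
    shortage μ Q = μ - Q + ∑ r ∈ Finset.range Q, ((Q : ℝ) - r) * poissonPMF μ r := by
  set g : ℕ → ℝ := fun r => ((r : ℝ) - (Q : ℝ)) * poissonPMF μ r with hg
  have hgs := summable_shift_poisson μ Q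
  have hs : Summable (fun r : ℕ => if Q ≤ r then g r else 0) := by
    refine Summable.of_norm_bounded hgs.abs fun r => ?_
    by_cases h : Q ≤ r <;> simp [h, hg, abs_mul, Real.norm_eq_abs, abs_nonneg, mul_nonneg]
  have h1 := Summable.sum_add_tsum_nat_add (f := fun r : ℕ => if Q ≤ r then g r else 0) Q hs
  have h2 := Summable.sum_add_tsum_nat_add (f := g) Q hgs
  have e1 : ∑ i ∈ Finset.range Q, (if Q ≤ i then g i else 0) = 0 := by
    refine Finset.sum_eq_zero fun i hi => ?_
    rw [Finset.mem_range] at hi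
    simp [Nat.not_le.mpr hi]
  have e2 : ∀ i : ℕ, (if Q ≤ i + Q then g (i + Q) else 0) = g (i + Q) := by
    intro i; simp [Nat.le_add_left]
  have hg2 : ∑' r : ℕ, g r = μ - Q := by
    have := Summable.tsum_sub (summable_id_poisson μ) ((summable_poisson μ).mul_left (Q : ℝ))
    have e : ∑' r : ℕ, g r
        = ∑' r : ℕ, ((r : ℝ) * poissonPMF μ r - (Q : ℝ) * poissonPMF μ r) :=
      tsum_congr fun r => by ring
    rw [e, this, tsum_id_poisson, tsum_mul_left, tsum_poisson, mul_one]
  have e3 : ∑ i ∈ Finset.range Q, g i = - ∑ r ∈ Finset.range Q, ((Q : ℝ) - r) * poissonPMF μ r := by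
    rw [← Finset.sum_neg_distrib]
    exact Finset.sum_congr rfl fun i _ => by simp [hg]; ring
  unfold shortage
  rw [show (∑' r : ℕ, if Q ≤ r then ((r:ℝ) - (Q:ℝ)) * poissonPMF μ r else 0)
      = ∑' r : ℕ, (if Q ≤ r then g r else 0) from rfl]
  rw [← h1, e1, zero_add, tsum_congr e2]
  rw [hg2, e3] at h2
  linarith

lemma hasDerivAt_poisson_zero (μ : ℝ) :
    HasDerivAt (fun x => poissonPMF x 0) (-poissonPMF μ 0) μ := by
  have h : HasDerivAt (fun x : ℝ => Real.exp (-x)) (-Real.exp (-μ)) μ := by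
    simpa using ((hasDerivAt_id μ).neg).exp
  unfold poissonPMF
  simpa [Nat.factorial] using h

lemma hasDerivAt_poisson_succ (μ : ℝ) (r : ℕ) :
    HasDerivAt (fun x => poissonPMF x (r + 1))
      (poissonPMF μ r - poissonPMF μ (r + 1)) μ := by
  have hexp : HasDerivAt (fun x : ℝ => Real.exp (-x)) (-Real.exp (-μ)) μ := by
    simpa using ((hasDerivAt_id μ).neg).exp
  have hpow : HasDerivAt (fun x : ℝ => x ^ (r + 1)) ((r + 1 : ℕ) * μ ^ r) μ := by
    simpa using hasDerivAt_pow (r + 1) μ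
  have h := (hexp.mul hpow).div_const ((Nat.factorial (r + 1) : ℝ))
  refine h.congr_deriv ?_
  have hr : ((Nat.factorial r : ℝ)) ≠ 0 := Nat.cast_ne_zero.mpr (Nat.factorial_ne_zero r)
  have hr1 : ((r : ℝ) + 1) ≠ 0 := by positivity
  simp only [poissonPMF, Nat.factorial_succ]
  push_cast
  field_simp
  ring

lemma hasDerivAt_partial (μ : ℝ) (k : ℕ) :
    HasDerivAt (fun x => ∑ r ∈ Finset.range (k + 1), poissonPMF x r)
      (-poissonPMF μ k) μ := by
  induction k with
  | zero => simpa using hasDerivAt_poisson_zero μ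
  | succ n ih =>
    have h : HasDerivAt (fun x => (∑ r ∈ Finset.range (n + 1), poissonPMF x r)
        + poissonPMF x (n + 1))
        (-poissonPMF μ n + (poissonPMF μ n - poissonPMF μ (n + 1))) μ :=
      ih.add (hasDerivAt_poisson_succ μ n)
    refine (h.congr_deriv (by ring)).congr_of_eventuallyEq ?_
    filter_upwards with x
    rw [Finset.sum_range_succ]

lemma hasDerivAt_G (μ : ℝ) (Q : ℕ) :
    HasDerivAt (fun x => ∑ r ∈ Finset.range Q, ((Q : ℝ) - r) * poissonPMF x r)
      (-∑ r ∈ Finset.range Q, poissonPMF μ r) μ := by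
  induction Q with
  | zero => simpa using hasDerivAt_const μ (0 : ℝ)
  | succ n ih =>
    have h := ih.add (hasDerivAt_partial μ n)
    have key : ∀ x : ℝ, ∑ r ∈ Finset.range (n + 1), (((n : ℝ) + 1) - r) * poissonPMF x r
        = (∑ r ∈ Finset.range n, ((n : ℝ) - r) * poissonPMF x r)
          + ∑ r ∈ Finset.range (n + 1), poissonPMF x r := by
      intro x
      have : ∑ r ∈ Finset.range (n + 1), (((n : ℝ) + 1) - r) * poissonPMF x r
          = ∑ r ∈ Finset.range (n + 1), (((n : ℝ) - r) * poissonPMF x r + poissonPMF x r) := by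
        exact Finset.sum_congr rfl fun r _ => by ring
      rw [this, Finset.sum_add_distrib, Finset.sum_range_succ
        (f := fun r => ((n : ℝ) - r) * poissonPMF x r)]
      simp
    have h2 : HasDerivAt (fun x => ∑ r ∈ Finset.range (n + 1), (((n : ℝ) + 1) - r) * poissonPMF x r)
        ((-∑ r ∈ Finset.range n, poissonPMF μ r) + -poissonPMF μ n) μ := by
      refine h.congr_of_eventuallyEq ?_
      filter_upwards with x using (key x)
    have hd : (-∑ r ∈ Finset.range n, poissonPMF μ r) + -poissonPMF μ n
        = -∑ r ∈ Finset.range (n + 1), poissonPMF μ r := by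
      rw [Finset.sum_range_succ]; ring
    rw [hd] at h2
    push_cast
    exact h2

lemma hasDerivAt_shortage (μ : ℝ) (Q : ℕ) :
    HasDerivAt (fun x => shortage x Q) (Ptail μ Q) μ := by
  have h : HasDerivAt (fun x : ℝ => x - (Q : ℝ)
      + ∑ r ∈ Finset.range Q, ((Q : ℝ) - r) * poissonPMF x r)
      (1 + -∑ r ∈ Finset.range Q, poissonPMF μ r) μ :=
    (((hasDerivAt_id μ).sub_const (Q : ℝ))).add (hasDerivAt_G μ Q)
  have h2 := h.congr_of_eventuallyEq (by filter_upwards with x using (shortage_eq x Q))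
  refine h2.congr_deriv ?_
  rw [Ptail_eq]; ring

lemma key_id (μ : ℝ) (Q : ℕ) :
    μ * Ptail μ Q - shortage μ Q = (Q : ℝ) * Ptail μ (Q + 1) := by
  rw [Ptail_eq, Ptail_eq, shortage_eq]
  have h1 : ∑ r ∈ Finset.range Q, μ * poissonPMF μ r
      = ∑ r ∈ Finset.range (Q + 1), (r : ℝ) * poissonPMF μ r := by
    rw [Finset.sum_range_succ' (f := fun r => (r : ℝ) * poissonPMF μ r)]
    push_cast
    simp [mu_mul_poisson]
  have h2 : ∑ r ∈ Finset.range Q, ((Q : ℝ) - r) * poissonPMF μ r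
      = ∑ r ∈ Finset.range (Q + 1), ((Q : ℝ) - r) * poissonPMF μ r := by
    rw [Finset.sum_range_succ]; simp
  have h3 : (∑ r ∈ Finset.range (Q + 1), (r : ℝ) * poissonPMF μ r)
      + ∑ r ∈ Finset.range (Q + 1), ((Q : ℝ) - r) * poissonPMF μ r
      = (Q : ℝ) * ∑ r ∈ Finset.range (Q + 1), poissonPMF μ r := by
    rw [← Finset.sum_add_distrib, Finset.mul_sum]
    exact Finset.sum_congr rfl fun r _ => by ring
  have h4 : μ * ∑ r ∈ Finset.range Q, poissonPMF μ r
      = ∑ r ∈ Finset.range Q, μ * poissonPMF μ r := Finset.mul_sum _ _ _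
  nlinarith [h1, h2, h3, h4]

/-- derivative of the fixed-cycle average cost. -/
theorem fixedCycleCost_hasDerivAt (J : ℕ) (hJ : 1 ≤ J)
    (lam : Fin J → ℝ) (hlam : ∀ j, 0 < lam j)
    (b : Fin J → ℝ) (Q : Fin J → ℕ) (hQ : ∀ j, 1 ≤ Q j) (A : ℝ)
    (T : ℝ) (hT : 0 < T) :
    HasDerivAt (fun t => (A + ∑ j, b j * shortage (lam j * t) (Q j)) / t)
      ((-A + ∑ j, b j * (Q j : ℝ) * Ptail (lam j * T) (Q j + 1)) / T ^ 2)
      T := by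
  have hnum : HasDerivAt (fun t => A + ∑ j, b j * shortage (lam j * t) (Q j))
      (∑ j, b j * (Ptail (lam j * T) (Q j) * lam j)) T := by
    refine HasDerivAt.const_add A ?_
    refine HasDerivAt.fun_sum fun j _ => ?_
    have hinner : HasDerivAt (fun t : ℝ => lam j * t) (lam j) T := by
      simpa using (hasDerivAt_id T).const_mul (lam j)
    exact ((hasDerivAt_shortage (lam j * T) (Q j)).comp T hinner).const_mul (b j)
  have hdiv := hnum.div (hasDerivAt_id' (x := T)) hT.ne'
  refine hdiv.congr_deriv ?_
  rw [mul_one]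
  congr 1
  have hkey : ∀ j, b j * (Ptail (lam j * T) (Q j) * lam j) * T
      - b j * shortage (lam j * T) (Q j)
      = b j * (Q j : ℝ) * Ptail (lam j * T) (Q j + 1) := by
    intro j
    have h := key_id (lam j * T) (Q j)
    linear_combination b j * h
  have hsum : ∑ j, (b j * (Ptail (lam j * T) (Q j) * lam j) * T
      - b j * shortage (lam j * T) (Q j))
      = ∑ j, b j * (Q j : ℝ) * Ptail (lam j * T) (Q j + 1) :=
    Finset.sum_congr rfl fun j _ => hkey j
  rw [Finset.sum_sub_distrib, ← Finset.sum_mul] at hsum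
  linarith
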